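/- Let C ∈ ℝ^{n×m}, a ∈ ℝ^n, b ∈ ℝ^m, λ > 0, and let T be a nonnegative matrix minimizing the ℓ2-penalized unbalanced optimal transport objective F_λ over all nonnegative matrices, with active set A = {(i, j) : T_{i,j} > 0}. Then the restriction x of T to A satisfies the linear system (Q_A x)_{(i,j)} = a_i + b_j − C_{i,j}/λ for all (i, j) ∈ A, where (Q_A x)_{(i,j)} = ∑_{l : (i,l) ∈ A} x_{(i,l)} + ∑_{k : (k,j) ∈ A} x_{(k,j)}. In particular, if the linear map Q_A : ℝ^A → ℝ^A is invertible, then x = Q_A^{-1}(m_A) − (1/λ)·Q_A^{-1}(c_A), where m_{(i,j)} = a_i + b_j and c_{(i,j)} = C_{i,j}; hence on any range of λ with fixed active set the solution is an affine function of 1/λ. -/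

import Mathlib

open Finset

/-- The ℓ2-penalized unbalanced optimal transport objective. -/
noncomputable def FobjL2 {n m : ℕ} (C : Matrix (Fin n) (Fin m) ℝ)
    (a : Fin n → ℝ) (b : Fin m → ℝ) (lam : ℝ)
    (T : Matrix (Fin n) (Fin m) ℝ) : ℝ :=
  (∑ i, ∑ j, C i j * T i j)
    + lam / 2 * ∑ i, ((∑ j, T i j) - a i) ^ 2
    + lam / 2 * ∑ j, ((∑ i, T i j) - b j) ^ 2

/-- The active set `A = {(i,j) : T_{i,j} > 0}` of a plan `T`. -/
def ActiveSet {n m : ℕ} (T : Matrix (Fin n) (Fin m) ℝ) : Type :=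
  {p : Fin n × Fin m // 0 < T p.1 p.2}

noncomputable instance {n m : ℕ} (T : Matrix (Fin n) (Fin m) ℝ) :
    Fintype (ActiveSet T) := by
  classical exact Subtype.fintype _

/-- The Gram operator `Q_A` of the marginal map restricted to the active set:
`(Q_A x)_{(i,j)} = ∑_{l : (i,l) ∈ A} x_{(i,l)} + ∑_{k : (k,j) ∈ A} x_{(k,j)}`. -/
noncomputable def QA {n m : ℕ} (T : Matrix (Fin n) (Fin m) ℝ)
    (x : ActiveSet T → ℝ) : ActiveSet T → ℝ := fun p =>
  (∑ q : ActiveSet T, if q.1.1 = p.1.1 then x q else 0)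
    + ∑ q : ActiveSet T, if q.1.2 = p.1.2 then x q else 0

lemma quadExp {n m : ℕ} (C : Matrix (Fin n) (Fin m) ℝ)
    (a : Fin n → ℝ) (b : Fin m → ℝ) (lam : ℝ)
    (T : Matrix (Fin n) (Fin m) ℝ) (i : Fin n) (j : Fin m) (t : ℝ) :
    FobjL2 C a b lam (fun k l => T k l + if k = i ∧ l = j then t else 0)
      = FobjL2 C a b lam T
        + t * (C i j + lam * ((∑ l, T i l) - a i) + lam * ((∑ k, T k j) - b j))
        + lam * t ^ 2 := by
  have hrow : ∀ k, (∑ l, (T k l + if k = i ∧ l = j then t else 0))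
      = (∑ l, T k l) + if k = i then t else 0 := by
    intro k
    rw [Finset.sum_add_distrib]
    congr 1
    by_cases hk : k = i
    · simp [hk]
    · simp [hk]
  have hcol : ∀ l, (∑ k, (T k l + if k = i ∧ l = j then t else 0))
      = (∑ k, T k l) + if l = j then t else 0 := by
    intro l
    rw [Finset.sum_add_distrib]
    congr 1
    by_cases hl : l = j
    · simp [hl]
    · simp [hl]
  have hC : (∑ k, ∑ l, C k l * (T k l + if k = i ∧ l = j then t else 0))
      = (∑ k, ∑ l, C k l * T k l) + C i j * t := by
    have : ∀ k, (∑ l, C k l * (T k l + if k = i ∧ l = j then t else 0))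
        = (∑ l, C k l * T k l) + if k = i then C k j * t else 0 := by
      intro k
      rw [show (fun l => C k l * (T k l + if k = i ∧ l = j then t else 0))
          = fun l => C k l * T k l + (if k = i ∧ l = j then C k l * t else 0) by
        funext l; by_cases h : k = i ∧ l = j <;> simp [h] <;> ring]
      rw [Finset.sum_add_distrib]
      congr 1
      by_cases hk : k = i
      · simp [hk]
      · simp [hk]
    simp only [this, Finset.sum_add_distrib]
    simp
  have hsq1 : (∑ k, (((∑ l, T k l) + if k = i then t else 0) - a k) ^ 2)
      = (∑ k, ((∑ l, T k l) - a k) ^ 2) + (2 * t * ((∑ l, T i l) - a i) + t ^ 2) := by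
    rw [show (fun k => (((∑ l, T k l) + if k = i then t else 0) - a k) ^ 2)
        = fun k => ((∑ l, T k l) - a k) ^ 2
            + (if k = i then 2 * t * ((∑ l, T k l) - a k) + t ^ 2 else 0) by
      funext k; by_cases hk : k = i <;> simp [hk] <;> ring]
    rw [Finset.sum_add_distrib]
    simp
  have hsq2 : (∑ l, (((∑ k, T k l) + if l = j then t else 0) - b l) ^ 2)
      = (∑ l, ((∑ k, T k l) - b l) ^ 2) + (2 * t * ((∑ k, T k j) - b j) + t ^ 2) := by
    rw [show (fun l => (((∑ k, T k l) + if l = j then t else 0) - b l) ^ 2)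
        = fun l => ((∑ k, T k l) - b l) ^ 2
            + (if l = j then 2 * t * ((∑ k, T k l) - b l) + t ^ 2 else 0) by
      funext l; by_cases hl : l = j <;> simp [hl] <;> ring]
    rw [Finset.sum_add_distrib]
    simp
  simp only [FobjL2, hC]
  simp only [hrow, hcol, hsq1, hsq2]
  ring

/-- On its active set, an optimal plan of ℓ2-penalized UOT solves the linear
system `Q_A x = m_A − (1/λ) c_A` with `m_{(i,j)} = a_i + b_j`, `c_{(i,j)} = C_{i,j}`.
In particular, if `Q_A` is invertible (with inverse `e`), then
`x = e(m_A) − (1/λ) e(c_A)`: within a fixed active set the solution is an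
affine function of `1/λ`. -/
theorem l2_uot_active_set_linear_system {n m : ℕ} (C : Matrix (Fin n) (Fin m) ℝ)
    (a : Fin n → ℝ) (b : Fin m → ℝ) (lam : ℝ) (hlam : 0 < lam)
    (T : Matrix (Fin n) (Fin m) ℝ) (hT : ∀ i j, 0 ≤ T i j)
    (hmin : ∀ T' : Matrix (Fin n) (Fin m) ℝ, (∀ i j, 0 ≤ T' i j) →
        FobjL2 C a b lam T ≤ FobjL2 C a b lam T') :
    (∀ p : ActiveSet T,
        QA T (fun q => T q.1.1 q.1.2) p = a p.1.1 + b p.1.2 - C p.1.1 p.1.2 / lam)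
    ∧ (∀ e : (ActiveSet T → ℝ) → (ActiveSet T → ℝ),
        (∀ x, e (QA T x) = x) → (∀ y, QA T (e y) = y) →
        ∀ p : ActiveSet T,
          T p.1.1 p.1.2 =
            e (fun q => a q.1.1 + b q.1.2) p - (1 / lam) * e (fun q => C q.1.1 q.1.2) p) := by
  classical
  -- stationarity: for each active (i,j), the directional derivative vanishes
  have hD : ∀ p : ActiveSet T,
      C p.1.1 p.1.2 + lam * ((∑ l, T p.1.1 l) - a p.1.1)
        + lam * ((∑ k, T k p.1.2) - b p.1.2) = 0 := by
    rintro ⟨⟨i, j⟩, hp⟩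
    simp only at hp ⊢
    set D := C i j + lam * ((∑ l, T i l) - a i) + lam * ((∑ k, T k j) - b j) with hDdef
    have key : ∀ t : ℝ, -T i j ≤ t → 0 ≤ t * D + lam * t ^ 2 := by
      intro t ht
      have hnn : ∀ k l, 0 ≤ T k l + if k = i ∧ l = j then t else 0 := by
        intro k l
        by_cases h : k = i ∧ l = j
        · simp [h]; obtain ⟨hk, hl⟩ := h; subst hk; subst hl; linarith
        · simp [h]; exact hT k l
      have := hmin _ hnn
      rw [quadExp, ← hDdef] at this
      linarith
    by_contra hne
    set ε := min (T i j) (|D| / (2 * lam)) with hε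
    have hεpos : 0 < ε := lt_min hp (by positivity)
    have hεle : ε ≤ |D| / (2 * lam) := min_le_right _ _
    have hεle' : ε ≤ T i j := min_le_left _ _
    set t : ℝ := if 0 < D then -ε else ε with htdef
    have ht1 : -T i j ≤ t := by
      by_cases h : 0 < D <;> simp [htdef, h] <;> linarith
    have htD : t * D = -(ε * |D|) := by
      rcases lt_trichotomy D 0 with h | h | h
      · simp [htdef, not_lt.2 h.le, abs_of_neg h]
      · exact absurd h hne
      · simp [htdef, h, abs_of_pos h]
    have htsq : t ^ 2 = ε ^ 2 := by
      by_cases h : 0 < D <;> simp [htdef, h]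
    have := key t ht1
    rw [htD, htsq] at this
    -- 0 ≤ -ε|D| + lam ε² ⇒ |D| ≤ lam ε ≤ |D|/2
    have h1 : ε * |D| ≤ lam * ε ^ 2 := by linarith
    have h2 : |D| ≤ lam * ε := by
      have := mul_le_mul_of_nonneg_left h1 (le_of_lt (inv_pos.2 hεpos))
      calc |D| = ε⁻¹ * (ε * |D|) := by field_simp
        _ ≤ ε⁻¹ * (lam * ε ^ 2) := this
        _ = lam * ε := by field_simp [hεpos.ne']
    have h3 : lam * ε ≤ |D| / 2 := by
      calc lam * ε ≤ lam * (|D| / (2 * lam)) := by nlinarith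
        _ = |D| / 2 := by field_simp
    have : |D| ≤ |D| / 2 := h2.trans h3
    have : |D| ≤ 0 := by linarith
    exact hne (abs_nonpos_iff.1 this)
  -- sum over active set equals full sum
  have h0 : ∀ p : Fin n × Fin m, ¬ 0 < T p.1 p.2 → T p.1 p.2 = 0 :=
    fun p h => le_antisymm (not_lt.1 h) (hT _ _)
  have hsub : ∀ f : Fin n × Fin m → ℝ,
      (∑ q : ActiveSet T, f q.1) = ∑ p : Fin n × Fin m, if 0 < T p.1 p.2 then f p else 0 := by
    intro f
    rw [← Finset.sum_filter]
    exact (Finset.sum_subtype _ (by simp) f).symm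
  have hrowsum : ∀ i : Fin n,
      (∑ q : ActiveSet T, if q.1.1 = i then T q.1.1 q.1.2 else 0) = ∑ l, T i l := by
    intro i
    rw [hsub (fun p => if p.1 = i then T p.1 p.2 else 0)]
    rw [show (fun p : Fin n × Fin m => if 0 < T p.1 p.2 then (if p.1 = i then T p.1 p.2 else 0) else 0)
        = fun p => if p.1 = i then T p.1 p.2 else 0 by
      funext p
      by_cases h : 0 < T p.1 p.2
      · simp [h]
      · simp [h, h0 p h]]
    rw [Fintype.sum_prod_type]
    rw [Finset.sum_eq_single i]
    · simp
    · intro k _ hk; simp [hk]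
    · simp
  have hcolsum : ∀ j : Fin m,
      (∑ q : ActiveSet T, if q.1.2 = j then T q.1.1 q.1.2 else 0) = ∑ k, T k j := by
    intro j
    rw [hsub (fun p => if p.2 = j then T p.1 p.2 else 0)]
    rw [show (fun p : Fin n × Fin m => if 0 < T p.1 p.2 then (if p.2 = j then T p.1 p.2 else 0) else 0)
        = fun p => if p.2 = j then T p.1 p.2 else 0 by
      funext p
      by_cases h : 0 < T p.1 p.2
      · simp [h]
      · simp [h, h0 p h]]
    rw [Fintype.sum_prod_type]
    have : ∀ k : Fin n, (∑ l, if l = j then T k l else 0) = T k j := by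
      intro k
      rw [Finset.sum_eq_single j]
      · simp
      · intro l _ hl; simp [hl]
      · simp
    simp only [this]
  have hmain : ∀ p : ActiveSet T,
      QA T (fun q => T q.1.1 q.1.2) p = a p.1.1 + b p.1.2 - C p.1.1 p.1.2 / lam := by
    intro p
    have hd := hD p
    have hQ : QA T (fun q => T q.1.1 q.1.2) p = (∑ l, T p.1.1 l) + (∑ k, T k p.1.2) := by
      simp only [QA, hrowsum p.1.1, hcolsum p.1.2]
    rw [hQ]
    field_simp
    linarith [mul_comm lam ((∑ l, T p.1.1 l) + (∑ k, T k p.1.2))]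
  refine ⟨hmain, ?_⟩
  intro e he (he' : ∀ y, QA T (e y) = y) p
  set mv : ActiveSet T → ℝ := fun q => a q.1.1 + b q.1.2 with hmv
  set cv : ActiveSet T → ℝ := fun q => C q.1.1 q.1.2 with hcv
  -- linearity of QA on the relevant combination
  have hlin : ∀ (u v : ActiveSet T → ℝ) (s : ℝ) (r : ActiveSet T),
      QA T (fun q => u q - s * v q) r = QA T u r - s * QA T v r := by
    intro u v s r
    simp only [QA]
    have e1 : ∀ (w : ActiveSet T → ℝ) (c : ActiveSet T → Prop) [DecidablePred c],
        (∑ q : ActiveSet T, if c q then u q - s * v q else 0)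
          = (∑ q : ActiveSet T, if c q then u q else 0)
            - s * ∑ q : ActiveSet T, if c q then v q else 0 := by
      intro w c _
      rw [Finset.mul_sum, ← Finset.sum_sub_distrib]
      apply Finset.sum_congr rfl
      intro q _
      by_cases h : c q <;> simp [h]
    rw [e1 u, e1 u]
    ring
  have hy : QA T (fun q => T q.1.1 q.1.2) = fun q => mv q - (1 / lam) * cv q := by
    funext q
    rw [hmain q]
    simp only [hmv, hcv]
    ring
  have hx : (fun q : ActiveSet T => T q.1.1 q.1.2) = fun q => e mv q - (1 / lam) * e cv q := by
    have h2 : QA T (fun q => e mv q - (1 / lam) * e cv q) = fun q => mv q - (1 / lam) * cv q := by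
      funext r
      rw [hlin (e mv) (e cv) (1 / lam) r, he' mv, he' cv]
    calc (fun q : ActiveSet T => T q.1.1 q.1.2)
        = e (QA T (fun q => T q.1.1 q.1.2)) := (he _).symm
      _ = e (QA T (fun q => e mv q - (1 / lam) * e cv q)) := by rw [hy, h2]
      _ = fun q => e mv q - (1 / lam) * e cv q := he _
  exact congrFun hx p
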